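/- With v_1, v_2, v_3 defined by the recursive Mex algorithm, for every n ≥ 1 one has v_3(n+1) - v_1(n+1) ≥ v_3(n) - v_1(n) + 2. -/

import Mathlib

/-- Minimum excluded value of a set of natural numbers. -/
noncomputable def mex (S : Set ℕ) : ℕ := sInf {m : ℕ | m ∉ S}

/-- Coordinates of a set of triples. -/
def coords (G : Set (ℕ × ℕ × ℕ)) : Set ℕ :=
  {k | ∃ x ∈ G, k = x.1 ∨ k = x.2.1 ∨ k = x.2.2}

/-- Pairwise coordinate differences of a set of triples. -/
def diffs (G : Set (ℕ × ℕ × ℕ)) : Set ℕ :=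
  {d | ∃ x ∈ G, d = x.2.1 - x.1 ∨ d = x.2.2 - x.2.1 ∨ d = x.2.2 - x.1}

/-- One step of the Mex algorithm: the next P-position. -/
noncomputable def step (G : Set (ℕ × ℕ × ℕ)) : ℕ × ℕ × ℕ :=
  let F := coords G
  let D := diffs G
  let a := mex F
  let b := mex ((fun d => a + d) '' D ∪ Set.Icc 1 a ∪ F)
  let c := mex ((fun d => b + d) '' D ∪ Set.Icc 1 b ∪ F)
  (a, b, c)

/-- The sets `G_n` of P-positions computed by the Mex algorithm. -/
noncomputable def Gset : ℕ → Set (ℕ × ℕ × ℕ)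
  | 0 => {(0, 0, 0)}
  | n + 1 => Gset n ∪ {step (Gset n)}

/-- The `n`-th P-position `(v_1(n), v_2(n), v_3(n))`. -/
noncomputable def v : ℕ → ℕ × ℕ × ℕ
  | 0 => (0, 0, 0)
  | n + 1 => step (Gset n)

noncomputable def v1 (n : ℕ) : ℕ := (v n).1
noncomputable def v2 (n : ℕ) : ℕ := (v n).2.1
noncomputable def v3 (n : ℕ) : ℕ := (v n).2.2

/-- `F_n`: the set of coordinates of elements of `G_n`. -/
noncomputable def Fset (n : ℕ) : Set ℕ := coords (Gset n)

/-- `D_n`: the set of pairwise coordinate differences over `G_n`. -/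
noncomputable def Dset (n : ℕ) : Set ℕ := diffs (Gset n)

/-!
Write `a, b, c` for `v1, v2, v3` and `g_n = mex D_n`. Suppose `c_n - b_n ≤ b_n - a_n` and
`[0, b_n - a_n] ⊆ D_n`, so that `g_n > b_n - a_n`. The Mex rules give `b_{n+1} ≥ a_{n+1} + g_n`
and `c_{n+1} = b_{n+1} + g_n`, hence
`c_{n+1} - a_{n+1} ≥ 2 g_n ≥ 2 (b_n - a_n) + 2 ≥ c_n - a_n + 2`.

The work is to keep `[0, b - a] ⊆ D` along the induction, i.e. to show that `b_{n+1} - a_{n+1}`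
is at most the second number `g'` missing from `D_n`. A value `a_{n+1} + γ` with `γ ∉ D_n` can
only be excluded from being `b_{n+1}` because it is some earlier `c_k`. If both `a_{n+1} + g_n`
and `a_{n+1} + g'` were such, then `g' ≥ g_n + 3` since the `c_k` are `3` apart, so `g_n + 1` and
`g_n + 2` lie in `D_n`; but above `b_n - a_n` the only elements of `D_n` are the differences
`c_k - a_k`, which are `2` apart.
-/

section Mex

variable {S T : Set ℕ} {k : ℕ}

lemma mex_le_of_notMem (h : k ∉ S) : mex S ≤ k := Nat.sInf_le h

lemma mem_of_lt_mex (h : k < mex S) : k ∈ S := by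
  by_contra hk
  exact (mex_le_of_notMem hk).not_gt h

lemma mex_notMem (hS : S.Finite) : mex S ∉ S :=
  Nat.sInf_mem hS.infinite_compl.nonempty

lemma le_mex (hS : S.Finite) (h : ∀ m < k, m ∈ S) : k ≤ mex S :=
  not_lt.1 fun hlt => mex_notMem hS (h _ hlt)

lemma mex_mono (hST : S ⊆ T) (hT : T.Finite) : mex S ≤ mex T :=
  mex_le_of_notMem fun h => mex_notMem hT (hST h)

lemma mex_lt_mex_insert_mex (hS : S.Finite) : mex S < mex (insert (mex S) S) := by
  refine le_mex (hS.insert _) fun m hm => ?_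
  rcases (Nat.lt_add_one_iff.1 hm).lt_or_eq with hlt | rfl
  · exact Or.inr (mem_of_lt_mex hlt)
  · exact Or.inl rfl

lemma mex_insert_mex_notMem (hS : S.Finite) : mex (insert (mex S) S) ∉ S :=
  fun h => mex_notMem (hS.insert _) (Or.inr h)

lemma mem_of_mex_lt_of_lt_mex_insert (h₁ : mex S < k) (h₂ : k < mex (insert (mex S) S)) :
    k ∈ S :=
  (mem_of_lt_mex h₂).resolve_left h₁.ne'

end Mex

def blocked (x : ℕ) (D F : Set ℕ) : Set ℕ := (fun d => x + d) '' D ∪ Set.Icc 1 x ∪ F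

section Blocked

variable {x γ : ℕ} {D F : Set ℕ}

lemma blocked_finite (hD : D.Finite) (hF : F.Finite) : (blocked x D F).Finite :=
  ((hD.image _).union (Set.finite_Icc _ _)).union hF

lemma add_mex_le_mex_blocked (hD : D.Finite) (hF : F.Finite) (h0 : 0 ∈ F) :
    x + mex D ≤ mex (blocked x D F) := by
  refine le_mex (blocked_finite hD hF) fun m hm => ?_
  rcases Nat.eq_zero_or_pos m with rfl | hpos
  · exact Or.inr h0
  rcases le_or_gt m x with hle | hgt
  · exact Or.inl (Or.inr ⟨hpos, hle⟩)
  · exact Or.inl (Or.inl ⟨m - x, mem_of_lt_mex (by omega), Nat.add_sub_cancel' hgt.le⟩)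

lemma mex_blocked_le (hγD : γ ∉ D) (hγ : 0 < γ) (hγF : x + γ ∉ F) :
    mex (blocked x D F) ≤ x + γ := by
  refine mex_le_of_notMem ?_
  rintro ((⟨d, hd, hdγ⟩ | ⟨-, hle⟩) | hF)
  · exact hγD (Nat.add_left_cancel hdγ ▸ hd)
  · omega
  · exact hγF hF

end Blocked

section Triples

variable {G H : Set (ℕ × ℕ × ℕ)}

lemma coords_mono (h : G ⊆ H) : coords G ⊆ coords H :=
  fun _ ⟨x, hx, hk⟩ => ⟨x, h hx, hk⟩

lemma diffs_mono (h : G ⊆ H) : diffs G ⊆ diffs H :=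
  fun _ ⟨x, hx, hd⟩ => ⟨x, h hx, hd⟩

lemma coords_finite (h : G.Finite) : (coords G).Finite := by
  refine (h.biUnion fun x _ => Set.toFinite {x.1, x.2.1, x.2.2}).subset ?_
  rintro k ⟨x, hx, hk⟩
  exact Set.mem_biUnion hx (by rcases hk with rfl | rfl | rfl <;> simp)

lemma diffs_finite (h : G.Finite) : (diffs G).Finite := by
  refine (h.biUnion fun x _ => Set.toFinite {x.2.1 - x.1, x.2.2 - x.2.1, x.2.2 - x.1}).subset ?_
  rintro d ⟨x, hx, hd⟩
  exact Set.mem_biUnion hx (by rcases hd with rfl | rfl | rfl <;> simp)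

end Triples

lemma Gset_eq_image (n : ℕ) : Gset n = v '' Set.Iic n := by
  induction n with
  | zero =>
    rw [show Set.Iic 0 = {0} from Set.Iic_bot, Set.image_singleton]
    rfl
  | succ n ih =>
    change Gset n ∪ {v (n + 1)} = _
    rw [ih, ← Order.succ_eq_add_one, Order.Iic_succ, Set.image_insert_eq, Set.union_singleton]

lemma Gset_finite (n : ℕ) : (Gset n).Finite :=
  Gset_eq_image n ▸ (Set.finite_Iic n).image v

lemma Gset_mono {m n : ℕ} (h : m ≤ n) : Gset m ⊆ Gset n := by
  rw [Gset_eq_image, Gset_eq_image]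
  exact Set.image_mono (Set.Iic_subset_Iic.2 h)

lemma Fset_finite (n : ℕ) : (Fset n).Finite := coords_finite (Gset_finite n)

lemma Dset_finite (n : ℕ) : (Dset n).Finite := diffs_finite (Gset_finite n)

lemma Fset_mono {m n : ℕ} (h : m ≤ n) : Fset m ⊆ Fset n := coords_mono (Gset_mono h)

lemma Dset_mono {m n : ℕ} (h : m ≤ n) : Dset m ⊆ Dset n := diffs_mono (Gset_mono h)

lemma mem_Fset {n x : ℕ} : x ∈ Fset n ↔ ∃ k ≤ n, x = v1 k ∨ x = v2 k ∨ x = v3 k := by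
  simp only [Fset, coords, Gset_eq_image, Set.mem_ofPred_eq, Set.exists_mem_image, Set.mem_Iic]
  rfl

lemma mem_Dset {n d : ℕ} :
    d ∈ Dset n ↔ ∃ k ≤ n, d = v2 k - v1 k ∨ d = v3 k - v2 k ∨ d = v3 k - v1 k := by
  simp only [Dset, diffs, Gset_eq_image, Set.mem_ofPred_eq, Set.exists_mem_image, Set.mem_Iic]
  rfl

lemma zero_mem_Fset (n : ℕ) : 0 ∈ Fset n := mem_Fset.2 ⟨0, n.zero_le, Or.inl rfl⟩

lemma zero_mem_Dset (n : ℕ) : 0 ∈ Dset n := mem_Dset.2 ⟨0, n.zero_le, Or.inl rfl⟩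

lemma pos_of_notMem_Dset {n γ : ℕ} (h : γ ∉ Dset n) : 0 < γ :=
  Nat.pos_of_ne_zero fun h0 => h (h0 ▸ zero_mem_Dset n)

lemma v2_succ (n : ℕ) : v2 (n + 1) = mex (blocked (v1 (n + 1)) (Dset n) (Fset n)) := rfl

lemma v1_succ_notMem_Fset (n : ℕ) : v1 (n + 1) ∉ Fset n := mex_notMem (Fset_finite n)

lemma v1_lt_v1_succ (n : ℕ) : v1 n < v1 (n + 1) := by
  have hle : v1 n ≤ v1 (n + 1) := by
    cases n with
    | zero => exact Nat.zero_le _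
    | succ m => exact mex_mono (Fset_mono m.le_succ) (Fset_finite _)
  refine hle.lt_of_ne fun h => v1_succ_notMem_Fset n ?_
  exact h ▸ mem_Fset.2 ⟨n, le_rfl, Or.inl rfl⟩

lemma v1_strictMono : StrictMono v1 := strictMono_nat_of_lt_succ v1_lt_v1_succ

lemma v1_succ_add_mex_le_v2_succ (n : ℕ) : v1 (n + 1) + mex (Dset n) ≤ v2 (n + 1) :=
  add_mex_le_mex_blocked (Dset_finite n) (Fset_finite n) (zero_mem_Fset n)

lemma v2_succ_add_mex_le_v3_succ (n : ℕ) : v2 (n + 1) + mex (Dset n) ≤ v3 (n + 1) :=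
  add_mex_le_mex_blocked (Dset_finite n) (Fset_finite n) (zero_mem_Fset n)

lemma add_le_of_forall_add_le_succ {f : ℕ → ℕ} {t n i j : ℕ}
    (h : ∀ k < n, f k + t ≤ f (k + 1)) (hij : i < j) (hj : j ≤ n) : f i + t ≤ f j := by
  induction j, hij using Nat.le_induction with
  | base => exact h i hj
  | succ j hij ih => exact (ih (by omega)).trans ((Nat.le_add_right _ t).trans (h j hj))

structure MexInvariant (k : ℕ) : Prop where
  v1_le_v2 : v1 k ≤ v2 k
  v2_le_v3 : v2 k ≤ v3 k
  v3_sub_v2_le : v3 k - v2 k ≤ v2 k - v1 k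
  Iic_subset_Dset : Set.Iic (v2 k - v1 k) ⊆ Dset k

namespace MexInvariant

variable {n : ℕ}

lemma v2_sub_v1_lt_mex (h : MexInvariant n) : v2 n - v1 n < mex (Dset n) :=
  not_le.1 fun hle => mex_notMem (Dset_finite n) (h.Iic_subset_Dset hle)

lemma v2_sub_v1_lt_succ (h : MexInvariant n) : v2 n - v1 n < v2 (n + 1) - v1 (n + 1) := by
  have := h.v2_sub_v1_lt_mex
  have := v1_succ_add_mex_le_v2_succ n
  omega

lemma v3_add_three_le_succ (h : MexInvariant n) : v3 n + 3 ≤ v3 (n + 1) := by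
  have := h.v1_le_v2
  have := h.v3_sub_v2_le
  have := h.v2_sub_v1_lt_mex
  have := v1_lt_v1_succ n
  have := v1_succ_add_mex_le_v2_succ n
  have := v2_succ_add_mex_le_v3_succ n
  omega

lemma v3_sub_v1_add_two_le_succ (h : MexInvariant n) :
    v3 n - v1 n + 2 ≤ v3 (n + 1) - v1 (n + 1) := by
  have := h.v1_le_v2
  have := h.v3_sub_v2_le
  have := h.v2_sub_v1_lt_mex
  have := v1_succ_add_mex_le_v2_succ n
  have := v2_succ_add_mex_le_v3_succ n
  omega

end MexInvariant

section Step

variable {n : ℕ}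

lemma v2_sub_v1_le_of_le (hI : ∀ k ≤ n, MexInvariant k) {m : ℕ} (hm : m ≤ n) :
    v2 m - v1 m ≤ v2 n - v1 n := by
  rcases hm.lt_or_eq with hlt | rfl
  · exact (add_le_of_forall_add_le_succ (f := fun k => v2 k - v1 k)
      (fun k hk => (hI k hk.le).v2_sub_v1_lt_succ) hlt le_rfl).trans' (Nat.le_add_right _ 1)
  · rfl

lemma v3_add_three_le_of_lt (hI : ∀ k ≤ n, MexInvariant k) {j k : ℕ} (hjk : j < k)
    (hk : k ≤ n) : v3 j + 3 ≤ v3 k :=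
  add_le_of_forall_add_le_succ (fun i hi => (hI i (by omega)).v3_add_three_le_succ) hjk hk

lemma v3_le_of_le (hI : ∀ k ≤ n, MexInvariant k) {j k : ℕ} (hjk : j ≤ k) (hk : k ≤ n) :
    v3 j ≤ v3 k := by
  rcases hjk.lt_or_eq with hlt | rfl
  · exact (v3_add_three_le_of_lt hI hlt hk).trans' (Nat.le_add_right _ 3)
  · rfl

lemma v3_sub_v1_add_two_le_of_lt (hI : ∀ k ≤ n, MexInvariant k) {j k : ℕ} (hjk : j < k)
    (hk : k ≤ n) : v3 j - v1 j + 2 ≤ v3 k - v1 k :=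
  add_le_of_forall_add_le_succ (f := fun k => v3 k - v1 k)
    (fun i hi => (hI i (by omega)).v3_sub_v1_add_two_le_succ) hjk hk

lemma le_v3_of_mem_Fset (hI : ∀ k ≤ n, MexInvariant k) {x : ℕ} (hx : x ∈ Fset n) :
    x ≤ v3 n := by
  obtain ⟨k, hk, hxk⟩ := mem_Fset.1 hx
  have := v3_le_of_le hI hk le_rfl
  have := (hI k hk).v1_le_v2
  have := (hI k hk).v2_le_v3
  rcases hxk with rfl | rfl | rfl <;> omega

lemma v3_succ_eq (hI : ∀ k ≤ n, MexInvariant k) : v3 (n + 1) = v2 (n + 1) + mex (Dset n) := by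
  have hgD : mex (Dset n) ∉ Dset n := mex_notMem (Dset_finite n)
  refine le_antisymm (mex_blocked_le hgD (pos_of_notMem_Dset hgD) fun hF => ?_)
    (v2_succ_add_mex_le_v3_succ n)
  have := le_v3_of_mem_Fset hI (show v2 (n + 1) + mex (Dset n) ∈ Fset n from hF)
  have := (hI n le_rfl).v1_le_v2
  have := (hI n le_rfl).v3_sub_v2_le
  have := (hI n le_rfl).v2_sub_v1_lt_mex
  have := v1_lt_v1_succ n
  have := v1_succ_add_mex_le_v2_succ n
  omega

lemma v1_succ_add_ne_v2 (hI : ∀ k ≤ n, MexInvariant k) {γ k : ℕ} (hγ : γ ∉ Dset n)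
    (hk : k ≤ n) : v1 (n + 1) + γ ≠ v2 k := by
  intro heq
  have hγpos := pos_of_notMem_Dset hγ
  cases k with
  | zero => exact absurd heq (by change _ ≠ 0; omega)
  | succ m =>
    have hlt : v1 (n + 1) < v2 (m + 1) := by omega
    rw [v2_succ] at hlt
    rcases mem_of_lt_mex hlt with (⟨d, hd, hde⟩ | ⟨-, hle⟩) | hF
    · refine hγ (Dset_mono hk ((hI (m + 1) hk).Iic_subset_Dset ?_))
      change v1 (m + 1) + d = v1 (n + 1) at hde
      rw [Set.mem_Iic]
      omega
    · exact (v1_strictMono (by omega : m + 1 < n + 1)).not_ge hle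
    · exact v1_succ_notMem_Fset n (Fset_mono (by omega) hF)

lemma exists_v3_eq_of_mem_Fset (hI : ∀ k ≤ n, MexInvariant k) {γ : ℕ} (hγ : γ ∉ Dset n)
    (h : v1 (n + 1) + γ ∈ Fset n) : ∃ k ≤ n, v3 k = v1 (n + 1) + γ := by
  obtain ⟨k, hk, h1 | h2 | h3⟩ := mem_Fset.1 h
  · have := v1_strictMono (show k < n + 1 by omega)
    omega
  · exact absurd h2 (v1_succ_add_ne_v2 hI hγ hk)
  · exact ⟨k, hk, h3.symm⟩

lemma exists_v3_sub_v1_eq (hI : ∀ k ≤ n, MexInvariant k) {e : ℕ} (he : e ∈ Dset n)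
    (hlt : v2 n - v1 n < e) : ∃ m ≤ n, v3 m - v1 m = e := by
  obtain ⟨m, hm, h1 | h2 | h3⟩ := mem_Dset.1 he
  · have := v2_sub_v1_le_of_le hI hm
    omega
  · have := v2_sub_v1_le_of_le hI hm
    have := (hI m hm).v3_sub_v2_le
    omega
  · exact ⟨m, hm, h3.symm⟩

lemma add_one_notMem_Dset (hI : ∀ k ≤ n, MexInvariant k) {e : ℕ} (he : e ∈ Dset n)
    (hlt : v2 n - v1 n < e) : e + 1 ∉ Dset n := by
  intro he'
  obtain ⟨i, hi, hie⟩ := exists_v3_sub_v1_eq hI he hlt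
  obtain ⟨j, hj, hje⟩ := exists_v3_sub_v1_eq hI he' (by omega)
  rcases lt_trichotomy i j with hij | rfl | hji
  · have := v3_sub_v1_add_two_le_of_lt hI hij hj
    omega
  · omega
  · have := v3_sub_v1_add_two_le_of_lt hI hji hi
    omega

lemma add_three_le_of_mem_Fset (hI : ∀ k ≤ n, MexInvariant k) {γ γ' : ℕ}
    (hγ : γ ∉ Dset n) (hγ' : γ' ∉ Dset n) (hlt : γ < γ') (h : v1 (n + 1) + γ ∈ Fset n)
    (h' : v1 (n + 1) + γ' ∈ Fset n) : γ + 3 ≤ γ' := by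
  obtain ⟨j, hj, hcj⟩ := exists_v3_eq_of_mem_Fset hI hγ h
  obtain ⟨k, hk, hck⟩ := exists_v3_eq_of_mem_Fset hI hγ' h'
  have hjk : j < k := lt_of_not_ge fun hkj => by
    have := v3_le_of_le hI hkj hj
    omega
  have := v3_add_three_le_of_lt hI hjk hk
  omega

lemma v1_succ_add_mex_insert_notMem_Fset (hI : ∀ k ≤ n, MexInvariant k)
    (hg : v1 (n + 1) + mex (Dset n) ∈ Fset n) :
    v1 (n + 1) + mex (insert (mex (Dset n)) (Dset n)) ∉ Fset n := by
  intro hg'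
  have hDn := Dset_finite n
  have h3 := add_three_le_of_mem_Fset hI (mex_notMem hDn) (mex_insert_mex_notMem hDn)
    (mex_lt_mex_insert_mex hDn) hg hg'
  have hgt : v2 n - v1 n < mex (Dset n) + 1 := Nat.lt_add_right 1 (hI n le_rfl).v2_sub_v1_lt_mex
  exact add_one_notMem_Dset hI (mem_of_mex_lt_of_lt_mex_insert (Nat.lt_add_one _) (by omega)) hgt
    (mem_of_mex_lt_of_lt_mex_insert (by omega) (by omega))

lemma v2_succ_le (hI : ∀ k ≤ n, MexInvariant k) :
    v2 (n + 1) ≤ v1 (n + 1) + mex (insert (mex (Dset n)) (Dset n)) := by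
  have hgD := mex_notMem (Dset_finite n)
  have hg'D := mex_insert_mex_notMem (Dset_finite n)
  by_cases hg : v1 (n + 1) + mex (Dset n) ∈ Fset n
  · exact mex_blocked_le hg'D (pos_of_notMem_Dset hg'D)
      (v1_succ_add_mex_insert_notMem_Fset hI hg)
  · exact (mex_blocked_le hgD (pos_of_notMem_Dset hgD) hg).trans
      (Nat.add_le_add_left (mex_lt_mex_insert_mex (Dset_finite n)).le _)

lemma mexInvariant_succ (hI : ∀ k ≤ n, MexInvariant k) : MexInvariant (n + 1) where
  v1_le_v2 := (Nat.le_add_right _ _).trans (v1_succ_add_mex_le_v2_succ n)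
  v2_le_v3 := (v3_succ_eq hI).symm ▸ Nat.le_add_right _ _
  v3_sub_v2_le := by
    have := v1_succ_add_mex_le_v2_succ n
    rw [v3_succ_eq hI]
    omega
  Iic_subset_Dset e he := by
    rcases (Set.mem_Iic.1 he).lt_or_eq with hlt | rfl
    · have := v2_succ_le hI
      have hlt' : e < mex (insert (mex (Dset n)) (Dset n)) := by omega
      rcases mem_of_lt_mex hlt' with rfl | hD
      · exact mem_Dset.2 ⟨n + 1, le_rfl, Or.inr (Or.inl (by rw [v3_succ_eq hI]; omega))⟩
      · exact Dset_mono n.le_succ hD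
    · exact mem_Dset.2 ⟨n + 1, le_rfl, Or.inl rfl⟩

end Step

theorem mexInvariant (n : ℕ) : MexInvariant n := by
  induction n using Nat.strong_induction_on with
  | _ n ih =>
    cases n with
    | zero => exact ⟨le_rfl, le_rfl, le_rfl, fun e he => Nat.le_zero.1 he ▸ zero_mem_Dset 0⟩
    | succ n => exact mexInvariant_succ fun k hk => ih k (Nat.lt_succ_of_le hk)

theorem stmt4 : ∀ n : ℕ, 1 ≤ n →
    (v3 n : ℤ) - v1 n + 2 ≤ (v3 (n + 1) : ℤ) - v1 (n + 1) := by
  intro n _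
  have hgap := (mexInvariant n).v3_sub_v1_add_two_le_succ
  have := (mexInvariant n).v1_le_v2
  have := (mexInvariant n).v2_le_v3
  have := (mexInvariant (n + 1)).v1_le_v2
  have := (mexInvariant (n + 1)).v2_le_v3
  omega
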